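/- arXiv:1607.05189 — 8 statements merged into one kernel-verified Lean document; each statement's English description precedes it below -/
import Mathlib

section
/- Let f, g : {0,1}^n → {0,1} be Boolean functions. If there exists a ∈ {0,1}^n such that f and g agree on every point at Hamming distance at most s(f) + s(g) from a, then f = g. -/
/-!
Induct on the distance of `x` from the centre `a`. If `x` lies outside the ball, it differs from
`a` in more than `s(f) + s(g)` coordinates, while at most `s(f) + s(g)` coordinates are sensitive
for `f` or `g` at `x`. Flipping a coordinate in the difference that is sensitive for neither moves
`x` one step closer to `a` without changing `f x` or `g x`.
-/

open Finset

variable {ι : Type*} [Fintype ι] [DecidableEq ι]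

/-- Flip one coordinate of a Boolean input. -/
def bflip (x : ι → Bool) (i : ι) : ι → Bool := Function.update x i (!x i)

/-- Flip a block (set) of coordinates of a Boolean input. -/
def bflipS (x : ι → Bool) (B : Finset ι) : ι → Bool := fun j => if j ∈ B then !x j else x j

/-- Sensitivity of `f` at `x`. -/
def sensAt (f : (ι → Bool) → Bool) (x : ι → Bool) : ℕ :=
  (univ.filter fun i => f (bflip x i) ≠ f x).card

/-- Sensitivity of `f`. -/
def sens (f : (ι → Bool) → Bool) : ℕ := univ.sup (sensAt f)

/-- 0-sensitivity of `f`. -/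
def sens0 (f : (ι → Bool) → Bool) : ℕ := (univ.filter fun x => f x = false).sup (sensAt f)

/-- 1-sensitivity of `f`. -/
def sens1 (f : (ι → Bool) → Bool) : ℕ := (univ.filter fun x => f x = true).sup (sensAt f)

/-- Block sensitivity of `f` at `x`: the largest number of pairwise disjoint
sensitive blocks. -/
noncomputable def bsAt (f : (ι → Bool) → Bool) (x : ι → Bool) : ℕ :=
  sSup {k | ∃ B : Fin k → Finset ι, (∀ i j, i ≠ j → Disjoint (B i) (B j)) ∧
    ∀ j, f (bflipS x (B j)) ≠ f x}

/-- Block sensitivity of `f`. -/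
noncomputable def bs (f : (ι → Bool) → Bool) : ℕ := univ.sup (bsAt f)

/-- 0-block sensitivity of `f`. -/
noncomputable def bs0 (f : (ι → Bool) → Bool) : ℕ := (univ.filter fun x => f x = false).sup (bsAt f)

/-- A DNF term, given by its positive variable set `t.1` and negative variable
set `t.2`, is true on `x`. -/
def TermTrue {n : ℕ} (t : Finset (Fin n) × Finset (Fin n)) (x : Fin n → Bool) : Prop :=
  (∀ j ∈ t.1, x j = true) ∧ (∀ j ∈ t.2, x j = false)

theorem sensAt_le_sens (f : (ι → Bool) → Bool) (x : ι → Bool) : sensAt f x ≤ sens f :=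
  le_sup (mem_univ x)

theorem hammingDist_bflip_add_one {x a : ι → Bool} {i : ι} (hi : x i ≠ a i) :
    hammingDist (bflip x i) a + 1 = hammingDist x a := by
  have hflip : bflip x i = Function.update x i (a i) := by
    rw [bflip, Bool.not_eq.mpr hi]
  have hdiff :
      ({j | bflip x i j ≠ a j} : Finset ι) = ({j | x j ≠ a j} : Finset ι).erase i := by
    ext j
    rcases eq_or_ne j i with rfl | hji
    · simp [hflip]
    · simp [hflip, hji]
  rw [hammingDist, hammingDist, hdiff, card_erase_add_one (by simpa using hi)]

theorem exists_mem_flip_invariant_of_sensAt_add_lt (f g : (ι → Bool) → Bool)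
    {x : ι → Bool} {D : Finset ι} (hD : sensAt f x + sensAt g x < #D) :
    ∃ i ∈ D, f (bflip x i) = f x ∧ g (bflip x i) = g x := by
  by_contra! hflip
  have hcover : D ⊆ ({i | f (bflip x i) ≠ f x} : Finset ι) ∪
      ({i | g (bflip x i) ≠ g x} : Finset ι) := by
    intro i hi
    by_cases hfi : f (bflip x i) = f x
    · simpa using Or.inr (hflip i hi hfi)
    · simpa using Or.inl hfi
  exact hD.not_ge ((card_le_card hcover).trans (card_union_le _ _))

theorem eq_of_forall_hammingDist_le_sens_add (f g : (ι → Bool) → Bool) (a : ι → Bool)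
    (hfg : ∀ x, hammingDist x a ≤ sens f + sens g → f x = g x) : f = g := by
  funext x
  induction hd : hammingDist x a using Nat.strong_induction_on generalizing x with
  | _ d ih =>
    by_cases hle : d ≤ sens f + sens g
    · exact hfg x (hd ▸ hle)
    have hsens : sensAt f x + sensAt g x < #{j | x j ≠ a j} := by
      have := sensAt_le_sens f x
      have := sensAt_le_sens g x
      change _ < hammingDist x a
      omega
    obtain ⟨i, hi, hfi, hgi⟩ := exists_mem_flip_invariant_of_sensAt_add_lt f g hsens
    have hcloser := hammingDist_bflip_add_one (mem_filter.mp hi).2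
    rw [← hfi, ← hgi]
    exact ih _ (by omega) _ rfl

theorem eq_of_agree_on_ball {n : ℕ} (f g : (Fin n → Bool) → Bool)
    (h : ∃ a : Fin n → Bool, ∀ x : Fin n → Bool,
      hammingDist x a ≤ sens f + sens g → f x = g x) : f = g := by
  obtain ⟨a, ha⟩ := h
  exact eq_of_forall_hammingDist_le_sens_add f g a ha
end

section
/- Let f, g : {0,1}^n → {0,1} both have sensitivity at most s. If f and g agree on a Hamming ball of radius 2s, then f = g. -/
open Finset

variable {ι : Type*} [Fintype ι] [DecidableEq ι]

theorem eq_of_agree_on_ball_two_s {n s : ℕ} (f g : (Fin n → Bool) → Bool)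
    (a : Fin n → Bool) (hf : sens f ≤ s) (hg : sens g ≤ s)
    (h : ∀ x : Fin n → Bool, hammingDist x a ≤ 2 * s → f x = g x) : f = g := by
  classical
  by_contra hne
  have hex : (univ.filter fun x : Fin n → Bool => f x ≠ g x).Nonempty := by
    rw [Finset.filter_nonempty_iff]
    by_contra h'
    push_neg at h'
    exact hne (funext fun x => h' x (mem_univ x))
  obtain ⟨x, hxmem, hxmin⟩ :=
    Finset.exists_min_image _ (fun x => hammingDist x a) hex
  rw [Finset.mem_filter] at hxmem
  have hx : f x ≠ g x := hxmem.2
  have hd : 2 * s < hammingDist x a := by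
    by_contra h'
    exact hx (h x (le_of_not_gt h'))
  set D : Finset (Fin n) := univ.filter fun i => x i ≠ a i with hDdef
  have hDcard : D.card = hammingDist x a := rfl
  -- flipping a differing coordinate strictly decreases distance
  have hflip : ∀ i ∈ D, hammingDist (bflip x i) a < hammingDist x a := by
    intro i hi
    have hia : x i ≠ a i := (Finset.mem_filter.mp hi).2
    have : (univ.filter fun j => bflip x i j ≠ a j) = D.erase i := by
      ext j
      simp only [Finset.mem_filter, Finset.mem_erase, mem_univ, true_and, hDdef]
      constructor
      · intro hj
        rcases eq_or_ne j i with rfl | hji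
        · exfalso
          simp only [bflip, Function.update_self] at hj
          cases hxi : x j <;> cases hai : a j <;> simp_all
        · refine ⟨hji, ?_⟩
          simpa [bflip, Function.update_of_ne hji] using hj
      · rintro ⟨hji, hj⟩
        simpa [bflip, Function.update_of_ne hji] using hj
    have : hammingDist (bflip x i) a = (D.erase i).card := by
      rw [hammingDist]; exact congrArg Finset.card this
    rw [this, ← hDcard]
    exact Finset.card_erase_lt_of_mem (by simpa using hi)
  -- minimality: at flipped points f and g agree
  have hagree : ∀ i ∈ D, f (bflip x i) = g (bflip x i) := by
    intro i hi
    by_contra h'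
    have := hxmin (bflip x i) (Finset.mem_filter.mpr ⟨mem_univ _, h'⟩)
    exact absurd (hflip i hi) (not_lt.mpr this)
  -- each differing coordinate is sensitive for f or for g
  have hsub : D ⊆ (univ.filter fun i => f (bflip x i) ≠ f x) ∪
      (univ.filter fun i => g (bflip x i) ≠ g x) := by
    intro i hi
    rw [Finset.mem_union, Finset.mem_filter, Finset.mem_filter]
    by_contra h'
    push_neg at h'
    have h1 := h'.1 (mem_univ i)
    have h2 := h'.2 (mem_univ i)
    exact hx (h1 ▸ h2 ▸ hagree i hi)
  have hf' : sensAt f x ≤ s := le_trans (Finset.le_sup (mem_univ x)) hf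
  have hg' : sensAt g x ≤ s := le_trans (Finset.le_sup (mem_univ x)) hg
  have : D.card ≤ 2 * s := by
    calc D.card ≤ _ := Finset.card_le_card hsub
    _ ≤ sensAt f x + sensAt g x := Finset.card_union_le _ _
    _ ≤ 2 * s := by omega
  omega
end

section
/- Let g : {0,1}^n → {0,1} be a Boolean function with 0-sensitivity s_0(g) = 1 (i.e., every x with g(x) = 0 has at most one sensitive coordinate, and some has exactly one). Then every connected component of the 1-set of g (as an induced subgraph of the n-dimensional Boolean hypercube graph) is a subcube. More precisely: if g(x) = g(x^i) = g(x^j) = 1 for distinct i, j, then g(x^{{i,j}}) = 1. -/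
open Finset

variable {ι : Type*} [Fintype ι] [DecidableEq ι]

theorem one_set_components_are_subcubes {n : ℕ} (g : (Fin n → Bool) → Bool)
    (hs : sens0 g = 1) (x : Fin n → Bool) (i j : Fin n) (hij : i ≠ j)
    (hx : g x = true) (hi : g (bflip x i) = true) (hj : g (bflip x j) = true) :
    g (bflipS x {i, j}) = true := by
  by_contra h
  have hy : g (bflipS x {i, j}) = false := by
    cases hgy : g (bflipS x {i, j}) <;> simp_all
  set y := bflipS x {i, j} with hydef
  have e1 : bflip y i = bflip x j := by
    funext k
    by_cases hk : k = i
    · subst hk; simp [hydef, bflip, bflipS, Function.update, hij]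
    · by_cases hk2 : k = j <;> simp [hydef, bflip, bflipS, Function.update, hk, hk2, hij, Ne.symm hij]
  have e2 : bflip y j = bflip x i := by
    funext k
    by_cases hk : k = j
    · subst hk; simp [hydef, bflip, bflipS, Function.update, hij, Ne.symm hij]
    · by_cases hk2 : k = i <;> simp [hydef, bflip, bflipS, Function.update, hk, hk2, hij, Ne.symm hij]
  have hle : sensAt g y ≤ 1 := by
    rw [← hs]
    exact Finset.le_sup (by simp [hy])
  have h2 : 2 ≤ sensAt g y := by
    have hsub : ({i, j} : Finset (Fin n)) ⊆ univ.filter fun k => g (bflip y k) ≠ g y := by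
      intro k hk
      simp only [mem_insert, mem_singleton] at hk
      rcases hk with rfl | rfl <;> simp [e1, e2, hi, hj, hy]
    calc 2 = ({i, j} : Finset (Fin n)).card := by
            rw [card_insert_of_notMem (by simp [hij]), card_singleton]
      _ ≤ _ := card_le_card hsub
  omega
end

section
/- Let f : {0,1}^n → {0,1} be computed by a DNF of size w (number of terms), such that f(0^n) = 0 and the maximum 0-block sensitivity of f is attained on the all-zeros input, and such that the positive-variable sets A_1,...,A_w of the terms are pairwise disjoint. Then bs_0(f) = w, where bs_0(f) is the maximum of bs(f,x) over x with f(x) = 0. -/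
open Finset

variable {ι : Type*} [Fintype ι] [DecidableEq ι]

theorem bs0_eq_size_of_block_property {n w : ℕ} (f : (Fin n → Bool) → Bool)
    (T : Fin w → Finset (Fin n) × Finset (Fin n))
    (hterm : ∀ i, Disjoint (T i).1 (T i).2)
    (hf : ∀ x, f x = true ↔ ∃ i, TermTrue (T i) x)
    (h0 : f (fun _ => false) = false)
    (hattain : bs0 f = bsAt f (fun _ => false))
    (hblock : ∀ i j, i ≠ j → Disjoint (T i).1 (T j).1) :
    bs0 f = w := by
  rw [hattain]
  have hAne : ∀ i, (T i).1.Nonempty := by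
    intro i
    rcases (T i).1.eq_empty_or_nonempty with h | h
    · exfalso
      have : f (fun _ => false) = true := (hf _).2 ⟨i, by
        constructor
        · intro j hj; rw [h] at hj; exact absurd hj (Finset.notMem_empty j)
        · intro j _; rfl⟩
      rw [h0] at this; exact Bool.false_ne_true this
    · exact h
  unfold bsAt
  set S : Set ℕ := {k | ∃ B : Fin k → Finset (Fin n), (∀ i j, i ≠ j → Disjoint (B i) (B j)) ∧
    ∀ j, f (bflipS (fun _ => false) (B j)) ≠ f (fun _ => false)} with hS
  have hbound : ∀ k ∈ S, k ≤ w := by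
    intro k hk
    obtain ⟨B, hdisj, hsens⟩ := hk
    have hterm' : ∀ j : Fin k, ∃ i, (T i).1 ⊆ B j := by
      intro j
      have htrue : f (bflipS (fun _ => false) (B j)) = true := by
        have := hsens j; rw [h0] at this; simpa using this
      obtain ⟨i, hi1, _⟩ := (hf _).1 htrue
      refine ⟨i, fun a ha => ?_⟩
      have := hi1 a ha
      simp [bflipS] at this
      exact this
    choose g hg using hterm'
    have hginj : Function.Injective g := by
      intro j j' hjj'
      by_contra hne
      obtain ⟨a, ha⟩ := hAne (g j)
      have h1 : a ∈ B j := hg j ha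
      have h2 : a ∈ B j' := hg j' (hjj' ▸ ha)
      exact Finset.disjoint_left.1 (hdisj j j' hne) h1 h2
    calc k = Fintype.card (Fin k) := (Fintype.card_fin k).symm
      _ ≤ Fintype.card (Fin w) := Fintype.card_le_of_injective g hginj
      _ = w := Fintype.card_fin w
  have hmem : w ∈ S := by
    refine ⟨fun i => (T i).1, hblock, fun i => ?_⟩
    rw [h0]
    have htrue : f (bflipS (fun _ => false) ((T i).1)) = true := by
      apply (hf _).2
      refine ⟨i, fun a ha => ?_, fun a ha => ?_⟩
      · simp [bflipS, ha]
      · have hna : a ∉ (T i).1 := fun h => Finset.disjoint_left.1 (hterm i) h ha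
        simp [bflipS, hna]
    simp [htrue]
  exact le_antisymm (csSup_le ⟨w, hmem⟩ hbound) (le_csSup ⟨w, hbound⟩ hmem)
end

section
/- Let f be a Boolean function computed by a DNF of size w (number of terms) and width d (maximum term size), with f(0^n) = 0, non-redundant terms (each term has an assignment satisfying only it), and pairwise disjoint positive-variable sets A_i (block property). Then s(f) ≥ ⌈w / (2d − 1)⌉. -/
open Finset

variable {ι : Type*} [Fintype ι] [DecidableEq ι]

/-- Greedy independent set lemma for a directed relation with bounded out-degree. -/
lemma indep_of_outdeg {α : Type*} [DecidableEq α] (R : α → α → Prop) [DecidableRel R] (D : ℕ) :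
    ∀ (m : ℕ) (V : Finset α), V.card ≤ m → (∀ i ∈ V, (V.filter (R i)).card ≤ D) →
      ∃ S ⊆ V, V.card ≤ (2 * D + 1) * S.card ∧ ∀ i ∈ S, ∀ k ∈ S, i ≠ k → ¬ R i k := by
  intro m
  induction m with
  | zero =>
    intro V hV _
    exact ⟨∅, empty_subset _, by simpa using Nat.le_zero.mp hV, by simp⟩
  | succ m ih =>
    intro V hV hdeg
    rcases V.eq_empty_or_nonempty with rfl | hne
    · exact ⟨∅, empty_subset _, by simp, by simp⟩
    -- double counting: some vertex has in-degree ≤ D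
    have hsum : ∑ v ∈ V, (V.filter fun i => R i v).card ≤ ∑ _v ∈ V, D := by
      have h1 : ∑ v ∈ V, (V.filter fun i => R i v).card
          = ∑ i ∈ V, (V.filter fun v => R i v).card := by
        simp only [card_filter]
        rw [Finset.sum_comm]
      rw [h1]
      exact Finset.sum_le_sum hdeg
    obtain ⟨v, hvV, hvdeg⟩ := Finset.exists_le_of_sum_le hne hsum
    set N : Finset α := insert v ((V.filter (R v)) ∪ (V.filter fun i => R i v)) with hN
    have hNcard : N.card ≤ 2 * D + 1 := by
      calc N.card ≤ ((V.filter (R v)) ∪ (V.filter fun i => R i v)).card + 1 :=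
            card_insert_le _ _
        _ ≤ ((V.filter (R v)).card + (V.filter fun i => R i v).card) + 1 := by
            exact Nat.add_le_add_right (card_union_le _ _) 1
        _ ≤ (D + D) + 1 := by
            exact Nat.add_le_add_right (Nat.add_le_add (hdeg v hvV) hvdeg) 1
        _ = 2 * D + 1 := by ring
    have hvN : v ∈ N := mem_insert_self _ _
    set V' : Finset α := V \ N with hV'
    have hV'sub : V' ⊆ V := sdiff_subset
    have hV'card : V'.card ≤ m := by
      have : V'.card < V.card := by
        apply card_lt_card
        constructor
        · exact hV'sub
        · intro hsub
          have h2 := hsub hvV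
          rw [hV', mem_sdiff] at h2
          exact h2.2 hvN
      omega
    obtain ⟨S, hSsub, hScard, hSind⟩ := ih V' hV'card (fun i hi => by
      refine le_trans (card_le_card ?_) (hdeg i (hV'sub hi))
      exact filter_subset_filter _ hV'sub)
    refine ⟨insert v S, ?_, ?_, ?_⟩
    · intro x hx
      rcases mem_insert.mp hx with rfl | hx
      · exact hvV
      · exact hV'sub (hSsub hx)
    · have hvS : v ∉ S := fun h => by
        have := hSsub h
        rw [hV', mem_sdiff] at this
        exact this.2 hvN
      rw [card_insert_of_notMem hvS]
      have hsplit : V.card ≤ V'.card + N.card := by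
        have : V ⊆ V' ∪ N := by
          intro x hx
          by_cases hxN : x ∈ N
          · exact mem_union_right _ hxN
          · exact mem_union_left _ (by rw [hV', mem_sdiff]; exact ⟨hx, hxN⟩)
        calc V.card ≤ (V' ∪ N).card := card_le_card this
          _ ≤ V'.card + N.card := card_union_le _ _
      calc V.card ≤ V'.card + N.card := hsplit
        _ ≤ (2 * D + 1) * S.card + (2 * D + 1) := Nat.add_le_add hScard hNcard
        _ = (2 * D + 1) * (S.card + 1) := by ring
    · intro i hi k hk hik
      rcases mem_insert.mp hi with hi | hi
      · rcases mem_insert.mp hk with hk | hk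
        · exact absurd (hi.trans hk.symm) hik
        · have hkV' := hSsub hk
          rw [hV', mem_sdiff] at hkV'
          intro hR
          rw [hi] at hR
          exact hkV'.2 (mem_insert_of_mem (mem_union_left _ (mem_filter.mpr ⟨hkV'.1, hR⟩)))
      · rcases mem_insert.mp hk with hk | hk
        · have hiV' := hSsub hi
          rw [hV', mem_sdiff] at hiV'
          intro hR
          rw [hk] at hR
          exact hiV'.2 (mem_insert_of_mem (mem_union_right _ (mem_filter.mpr ⟨hiV'.1, hR⟩)))
        · exact hSind i hi k hk hik


theorem sens_ge_size_div {n w d : ℕ} (f : (Fin n → Bool) → Bool)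
    (T : Fin w → Finset (Fin n) × Finset (Fin n))
    (hterm : ∀ i, Disjoint (T i).1 (T i).2)
    (hf : ∀ x, f x = true ↔ ∃ i, TermTrue (T i) x)
    (h0 : f (fun _ => false) = false)
    (hnr : ∀ i, ∃ x, TermTrue (T i) x ∧ ∀ j, j ≠ i → ¬ TermTrue (T j) x)
    (hblock : ∀ i j, i ≠ j → Disjoint (T i).1 (T j).1)
    (hd : d = univ.sup fun i => (T i).1.card + (T i).2.card) :
    (w + (2 * d - 1) - 1) / (2 * d - 1) ≤ sens f := by
  -- each positive set is nonempty
  have hA : ∀ i, ((T i).1).Nonempty := by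
    intro i
    rw [nonempty_iff_ne_empty]
    intro hAe
    have : TermTrue (T i) (fun _ => false) := by
      constructor
      · intro j hj; rw [hAe] at hj; exact absurd hj (notMem_empty j)
      · intro j _; rfl
    have := (hf (fun _ => false)).mpr ⟨i, this⟩
    rw [h0] at this; exact Bool.false_ne_true this
  rcases Nat.eq_zero_or_pos w with hw | hw
  · subst hw
    rcases Nat.eq_zero_or_pos (2 * d - 1) with hm | hm
    · simp [hm]
    · have : (0 + (2 * d - 1) - 1) / (2 * d - 1) = 0 := Nat.div_eq_of_lt (by omega)
      rw [this]; exact Nat.zero_le _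
  -- d ≥ 1
  have hd1 : 1 ≤ d := by
    have i0 : Fin w := ⟨0, hw⟩
    have h1 : (T i0).1.card + (T i0).2.card ≤ d := by
      rw [hd]; exact Finset.le_sup (f := fun i => (T i).1.card + (T i).2.card) (mem_univ i0)
    have h2 : 1 ≤ (T i0).1.card := card_pos.mpr (hA i0)
    omega
  have hneg : ∀ i, (T i).2.card ≤ d - 1 := by
    intro i
    have h1 : (T i).1.card + (T i).2.card ≤ d := by
      rw [hd]; exact Finset.le_sup (f := fun i => (T i).1.card + (T i).2.card) (mem_univ i)
    have h2 : 1 ≤ (T i).1.card := card_pos.mpr (hA i)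
    omega
  -- the conflict relation
  set R : Fin w → Fin w → Prop := fun i k => ((T i).2 ∩ (T k).1).Nonempty with hR
  have hRdec : DecidableRel R := fun i k => Finset.decidableNonempty
  have hdeg : ∀ i ∈ (univ : Finset (Fin w)),
      (univ.filter (R i)).card ≤ d - 1 := by
    intro i _
    refine le_trans ?_ (hneg i)
    have hmap : ∀ k ∈ univ.filter (R i),
        (if h : ((T i).2 ∩ (T k).1).Nonempty then h.choose else (hA i).choose) ∈ (T i).2 := by
      intro k hk
      have hk' : R i k := (mem_filter.mp hk).2
      rw [dif_pos hk']
      exact (mem_inter.mp hk'.choose_spec).1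
    refine Finset.card_le_card_of_injOn _ hmap ?_
    intro k1 hk1 k2 hk2 heq
    by_contra hne
    have hk1' : R i k1 := by simpa using hk1
    have hk2' : R i k2 := by simpa using hk2
    have heq' : (if h : ((T i).2 ∩ (T k1).1).Nonempty then h.choose else (hA i).choose)
        = (if h : ((T i).2 ∩ (T k2).1).Nonempty then h.choose else (hA i).choose) := heq
    rw [dif_pos hk1', dif_pos hk2'] at heq'
    have e1 := (mem_inter.mp hk1'.choose_spec).2
    have e2 := (mem_inter.mp hk2'.choose_spec).2
    rw [heq'] at e1
    exact Finset.disjoint_left.mp (hblock k1 k2 hne) e1 e2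
  obtain ⟨S, -, hScard, hSind⟩ :=
    indep_of_outdeg R (d - 1) (univ : Finset (Fin w)).card univ le_rfl hdeg
  rw [card_univ, Fintype.card_fin] at hScard
  -- representatives
  set a : Fin w → Fin n := fun i => (hA i).choose with ha
  have haA : ∀ i, a i ∈ (T i).1 := fun i => (hA i).choose_spec
  -- the input point
  set x : Fin n → Bool := fun j => decide (∃ i ∈ S, j ∈ (T i).1.erase (a i)) with hx
  have hxval : ∀ j, x j = true ↔ ∃ i ∈ S, j ∈ (T i).1.erase (a i) := by
    intro j; rw [hx]; simp
  -- a i is false at x, for i ∈ S (indeed for all i)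
  have hxa : ∀ i, x (a i) = false := by
    intro i
    rw [Bool.eq_false_iff]
    intro htrue
    obtain ⟨k, _, hk2⟩ := (hxval (a i)).mp htrue
    rw [mem_erase] at hk2
    by_cases hik : i = k
    · subst hik; exact hk2.1 rfl
    · exact Finset.disjoint_left.mp (hblock i k hik) (haA i) hk2.2
  -- f x = false
  have hfx : f x = false := by
    rw [Bool.eq_false_iff]
    intro htrue
    obtain ⟨k, hk1, hk2⟩ := (hf x).mp htrue
    by_cases hkS : k ∈ S
    · have := hk1 (a k) (haA k)
      rw [hxa k] at this; exact Bool.false_ne_true this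
    · obtain ⟨e, he⟩ := hA k
      have hxe := hk1 e he
      obtain ⟨i, hiS, hie⟩ := (hxval e).mp hxe
      rw [mem_erase] at hie
      have hik : i ≠ k := fun h => hkS (h ▸ hiS)
      exact Finset.disjoint_left.mp (hblock i k hik) hie.2 he
  -- each a i with i ∈ S is sensitive at x
  have hsens : ∀ i ∈ S, f (bflip x (a i)) = true := by
    intro i hiS
    rw [hf]
    refine ⟨i, ?_, ?_⟩
    · intro j hj
      by_cases hji : j = a i
      · subst hji
        rw [bflip, Function.update_self, hxa i]
        rfl
      · rw [bflip, Function.update_of_ne hji]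
        exact (hxval j).mpr ⟨i, hiS, mem_erase.mpr ⟨hji, hj⟩⟩
    · intro j hj
      have hji : j ≠ a i := fun h => Finset.disjoint_left.mp (hterm i) (haA i) (h ▸ hj)
      rw [bflip, Function.update_of_ne hji]
      rw [Bool.eq_false_iff]
      intro htrue
      obtain ⟨k, hkS, hke⟩ := (hxval j).mp htrue
      rw [mem_erase] at hke
      by_cases hik : i = k
      · subst hik; exact Finset.disjoint_left.mp (hterm i) hke.2 hj
      · exact hSind i hiS k hkS hik ⟨j, mem_inter.mpr ⟨hj, hke.2⟩⟩
  -- sensitivity count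
  have hcard : S.card ≤ sensAt f x := by
    rw [sensAt]
    have hsub : S.image a ⊆ univ.filter fun j => f (bflip x j) ≠ f x := by
      intro j hj
      obtain ⟨i, hiS, rfl⟩ := mem_image.mp hj
      rw [mem_filter]
      refine ⟨mem_univ _, ?_⟩
      rw [hsens i hiS, hfx]
      simp
    have hinj : Set.InjOn a S := by
      intro i hi k hk heq
      by_contra hne
      exact Finset.disjoint_left.mp (hblock i k hne) (haA i) (heq ▸ haA k)
    calc S.card = (S.image a).card := (card_image_of_injOn hinj).symm
      _ ≤ _ := card_le_card hsub
  have hsens_ge : S.card ≤ sens f := le_trans hcard (Finset.le_sup (mem_univ x))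
  -- arithmetic
  have hm : 2 * (d - 1) + 1 = 2 * d - 1 := by omega
  rw [hm] at hScard
  have hw_le : w ≤ (2 * d - 1) * sens f :=
    le_trans hScard (Nat.mul_le_mul_left _ hsens_ge)
  set m := 2 * d - 1 with hmdef
  have hm1 : 1 ≤ m := by omega
  have h1 : (w + m - 1) / m ≤ (m * sens f + (m - 1)) / m :=
    Nat.div_le_div_right (by omega)
  have h2 : (m * sens f + (m - 1)) / m = sens f + (m - 1) / m := Nat.mul_add_div (by omega) (sens f) (m - 1)
  have h3 : (m - 1) / m = 0 := Nat.div_eq_of_lt (by omega)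
  omega
end

section
/- Let f be a Boolean function computed by a DNF of width d, with f(0^n) = 0, non-redundant terms, and pairwise disjoint positive-variable sets (block property). Then s(f) ≥ ⌈d/2⌉. -/
open Finset

variable {ι : Type*} [Fintype ι] [DecidableEq ι]

theorem sens_ge_half_width {n w d : ℕ} (f : (Fin n → Bool) → Bool)
    (T : Fin w → Finset (Fin n) × Finset (Fin n))
    (hterm : ∀ i, Disjoint (T i).1 (T i).2)
    (hf : ∀ x, f x = true ↔ ∃ i, TermTrue (T i) x)
    (h0 : f (fun _ => false) = false)
    (hnr : ∀ i, ∃ x, TermTrue (T i) x ∧ ∀ j, j ≠ i → ¬ TermTrue (T j) x)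
    (hblock : ∀ i j, i ≠ j → Disjoint (T i).1 (T j).1)
    (hd : d = univ.sup fun i => (T i).1.card + (T i).2.card) :
    (d + 1) / 2 ≤ sens f := by
  classical
  have hAne : ∀ k, ((T k).1).Nonempty := by
    intro k
    rcases ((T k).1).eq_empty_or_nonempty with h | h
    · exfalso
      have : f (fun _ => false) = true := (hf _).mpr ⟨k, by simp [TermTrue, h]⟩
      simp [h0] at this
    · exact h
  rcases Nat.eq_zero_or_pos w with hw | hw
  · have hd0 : d = 0 := by subst hw; simpa using hd
    simp [hd0]
  haveI : Nonempty (Fin w) := ⟨⟨0, hw⟩⟩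
  obtain ⟨i0, -, hi0⟩ := Finset.exists_mem_eq_sup (univ : Finset (Fin w))
    Finset.univ_nonempty (fun i => (T i).1.card + (T i).2.card)
  set A := (T i0).1 with hA
  set N := (T i0).2 with hN
  set y : Fin n → Bool := fun j => decide (j ∈ A) with hy
  have hyA : ∀ j ∈ A, y j = true := fun j hj => by simp [hy, hj]
  have hyN : ∀ j, j ∉ A → y j = false := fun j hj => by simp [hy, hj]
  have hfy : f y = true := by
    refine (hf _).mpr ⟨i0, fun j hj => hyA j hj, fun j hj => ?_⟩
    exact hyN j (Finset.disjoint_right.mp (hterm i0) hj)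
  -- every a ∈ A is sensitive at y
  have hA_sens : ∀ a ∈ A, f (bflip y a) = false := by
    intro a ha
    by_contra h
    have h' : f (bflip y a) = true := by
      cases hfb : f (bflip y a) with
      | false => exact absurd hfb h
      | true => rfl
    obtain ⟨k, hk1, hk2⟩ := (hf _).mp h'
    have hba : bflip y a a = false := by simp [bflip, hyA a ha]
    by_cases hk : k = i0
    · subst hk
      have := hk1 a ha
      simp [hba] at this
    · obtain ⟨b, hb⟩ := hAne k
      have hbtrue := hk1 b hb
      have hbne : b ≠ a := by rintro rfl; rw [hbtrue] at hba; exact absurd hba (by simp)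
      have hyb : y b = true := by rwa [bflip, Function.update_of_ne hbne] at hbtrue
      have hbA : b ∈ A := by simpa [hy] using hyb
      exact Finset.disjoint_left.mp (hblock k i0 hk) hb hbA
  -- bad j ∈ N give sensitivity at the all-false point
  have hB_sens : ∀ j ∈ N, f (bflip y j) = true →
      f (bflip (fun _ => false) j) = true := by
    intro j hj hjt
    have hjA : j ∉ A := Finset.disjoint_right.mp (hterm i0) hj
    have hyj : y j = false := hyN j hjA
    have hbj : bflip y j j = true := by simp [bflip, hyj]
    obtain ⟨k, hk1, hk2⟩ := (hf _).mp hjt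
    have hk : k ≠ i0 := by
      rintro rfl
      have := hk2 j hj
      rw [hbj] at this
      exact absurd this (by simp)
    have hjn2 : j ∉ (T k).2 := by
      intro h
      have := hk2 j h
      rw [hbj] at this
      exact absurd this (by simp)
    refine (hf _).mpr ⟨k, ?_, ?_⟩
    · intro m hm
      have hmt := hk1 m hm
      have hmA : m ∉ A := Finset.disjoint_left.mp (hblock k i0 hk) hm
      have hmj : m = j := by
        by_contra hne
        rw [bflip, Function.update_of_ne hne] at hmt
        exact hmA (by simpa [hy] using hmt)
      subst hmj
      simp [bflip]
    · intro m hm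
      have hmj : m ≠ j := fun h => hjn2 (h ▸ hm)
      simp [bflip, Function.update_of_ne hmj]
  -- counting
  set G := N.filter (fun j => f (bflip y j) = false) with hG
  set B := N.filter (fun j => ¬ f (bflip y j) = false) with hB
  have hGB : G.card + B.card = N.card := Finset.card_filter_add_card_filter_not _
  have h1 : A.card + G.card ≤ sens f := by
    have hsub : A ∪ G ⊆ univ.filter (fun i => f (bflip y i) ≠ f y) := by
      intro a ha
      rcases Finset.mem_union.mp ha with ha | ha
      · simp only [Finset.mem_filter, Finset.mem_univ, true_and]
        rw [hA_sens a ha, hfy]; simp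
      · simp only [hG, Finset.mem_filter] at ha
        simp only [Finset.mem_filter, Finset.mem_univ, true_and]
        rw [ha.2, hfy]; simp
    have hdisj : Disjoint A G := by
      refine Finset.disjoint_left.mpr fun a haA haG => ?_
      have : a ∈ N := (Finset.mem_filter.mp haG).1
      exact Finset.disjoint_left.mp (hterm i0) haA this
    calc A.card + G.card = (A ∪ G).card := (Finset.card_union_of_disjoint hdisj).symm
      _ ≤ _ := Finset.card_le_card hsub
      _ = sensAt f y := rfl
      _ ≤ sens f := Finset.le_sup (Finset.mem_univ y)
  have h2 : B.card ≤ sens f := by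
    have hsub : B ⊆ univ.filter
        (fun i => f (bflip (fun _ => false) i) ≠ f (fun _ => false)) := by
      intro j hj
      simp only [hB, Finset.mem_filter] at hj
      have hjt : f (bflip y j) = true := by
        cases hfb : f (bflip y j) with
        | false => exact absurd hfb hj.2
        | true => rfl
      simp only [Finset.mem_filter, Finset.mem_univ, true_and]
      rw [hB_sens j hj.1 hjt, h0]; simp
    calc B.card ≤ _ := Finset.card_le_card hsub
      _ = sensAt f (fun _ => false) := rfl
      _ ≤ sens f := Finset.le_sup (Finset.mem_univ _)
  have hdval : d = A.card + N.card := by rw [hd, hi0]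
  omega
end

section
/- Let f be a Boolean function computed by a DNF with f(0^n) = 0, non-redundant terms, pairwise disjoint positive-variable sets (block property), and with maximum block sensitivity attained at 0^n (normalized). Then bs(f) ≤ 4·s(f)^2. -/
open Finset

variable {ι : Type*} [Fintype ι] [DecidableEq ι]

/-!
A sensitive block at `0ⁿ` must contain a whole positive set `A_i`, and these are disjoint and
nonempty, so `bs f ≤ w`. At `1_{A_i}` every variable of `A_i` is sensitive, and so is every
`v ∈ N_i` with `f (1_{A_i ∪ {v}}) = 0`; at `1_{A_i \ {u}}` every other `v ∈ N_i` is sensitive.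
Hence `|A_i| + |N_i| ≤ 2s`, so at most `|N_i| ≤ 2s - 1` of the disjoint sets `A_j` meet `N_i`.
In the conflict graph (`A_j` meets `N_i` or `A_i` meets `N_j`) every set of terms thus has one
of degree at most `2(2s - 1)`, and a greedy choice gives an independent set `I` with
`w ≤ |I| (4s - 1)`. Finally `|I| ≤ s`, witnessed by one sensitive point, so `w ≤ 4s²`.
-/

open Function

section BoolIndicator

variable {α : Type*} [DecidableEq α]

def boolIndicator (S : Finset α) : α → Bool := fun v => decide (v ∈ S)

@[simp]
theorem boolIndicator_apply (S : Finset α) (v : α) : boolIndicator S v = decide (v ∈ S) := rfl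

theorem bflip_boolIndicator_of_mem {S : Finset α} {u : α} (hu : u ∈ S) :
    bflip (boolIndicator S) u = boolIndicator (S.erase u) := by
  funext v
  by_cases hv : v = u
  · subst hv; simp [bflip, hu]
  · simp [bflip, hv]

theorem bflip_boolIndicator_of_notMem {S : Finset α} {u : α} (hu : u ∉ S) :
    bflip (boolIndicator S) u = boolIndicator (insert u S) := by
  funext v
  by_cases hv : v = u
  · subst hv; simp [bflip, hu]
  · simp [bflip, hv]

theorem bflipS_false (B : Finset α) : bflipS (fun _ => false) B = boolIndicator B := by
  funext v
  by_cases hv : v ∈ B <;> simp [bflipS, hv]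

end BoolIndicator

section Sensitivity

variable {α : Type*} [DecidableEq α] {f : (α → Bool) → Bool}

theorem card_le_sens [Fintype α] {x : α → Bool} {S : Finset α}
    (hS : ∀ v ∈ S, f (bflip x v) ≠ f x) : #S ≤ sens f :=
  (card_le_card fun v hv => mem_filter.mpr ⟨mem_univ v, hS v hv⟩).trans
    (le_sup (f := sensAt f) (mem_univ x))

/-- Disjoint sensitive blocks contain distinct sets `A t`, as these are nonempty. -/
theorem bsAt_le_card_of_forall_exists_subset {κ : Type*} [Fintype κ] {x : α → Bool}
    {A : κ → Finset α} (hA : ∀ t, (A t).Nonempty)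
    (hsub : ∀ B : Finset α, f (bflipS x B) ≠ f x → ∃ t, A t ⊆ B) :
    bsAt f x ≤ Fintype.card κ := by
  refine csSup_le' fun k ⟨B, hdisj, hsens⟩ => ?_
  choose g hg using fun j => hsub (B j) (hsens j)
  have hg_inj : Injective g := fun j₁ j₂ hj => by
    by_contra hne
    obtain ⟨v, hv⟩ := hA (g j₁)
    exact disjoint_left.mp (hdisj j₁ j₂ hne) (hg j₁ hv) (hg j₂ (hj ▸ hv))
  simpa using Fintype.card_le_of_injective g hg_inj

end Sensitivity

namespace SimpleGraph

variable {V : Type*} [DecidableEq V] (G : SimpleGraph V) [DecidableRel G.Adj]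

theorem exists_mem_card_filter_adj_le [Fintype V] (r : V → V → Prop) [DecidableRel r] {d : ℕ}
    (hr : ∀ v, #{u | r v u} ≤ d) (hG : ∀ u v, G.Adj u v → r u v ∨ r v u)
    {R : Finset V} (hR : R.Nonempty) : ∃ v ∈ R, #{u ∈ R | G.Adj v u} ≤ 2 * d := by
  have hout : ∀ v, #{u ∈ R | r v u} ≤ d := fun v =>
    (card_le_card (filter_subset_filter _ (subset_univ R))).trans (hr v)
  refine exists_le_of_sum_le hR ?_
  calc ∑ v ∈ R, #{u ∈ R | G.Adj v u}
      ≤ ∑ v ∈ R, (#{u ∈ R | r v u} + #{u ∈ R | r u v}) := by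
        refine sum_le_sum fun v _ => (card_le_card ?_).trans (card_union_le _ _)
        rw [← filter_or]
        exact monotone_filter_right R fun u _ => hG v u
    _ = 2 * ∑ v ∈ R, #{u ∈ R | r v u} := by
        have := sum_card_bipartiteAbove_eq_sum_card_bipartiteBelow (s := R) (t := R) (r := r)
        simp only [bipartiteAbove, bipartiteBelow] at this
        rw [sum_add_distrib]
        omega
    _ ≤ ∑ _v ∈ R, 2 * d := by
        rw [mul_sum]
        exact sum_le_sum fun v _ => Nat.mul_le_mul_left 2 (hout v)

theorem exists_isIndepSet_card_le_mul (D : ℕ)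
    (hdeg : ∀ R : Finset V, R.Nonempty → ∃ v ∈ R, #{u ∈ R | G.Adj v u} ≤ D)
    (R : Finset V) :
    ∃ I ⊆ R, G.IsIndepSet (I : Set V) ∧ #R ≤ #I * (D + 1) := by
  induction R using Finset.strongInduction with
  | H R ih =>
    rcases R.eq_empty_or_nonempty with rfl | hR
    · exact ⟨∅, subset_refl _, by simp [IsIndepSet], by simp⟩
    obtain ⟨v, hvR, hv⟩ := hdeg R hR
    set R' := {u ∈ R.erase v | ¬ G.Adj v u}
    obtain ⟨I, hI, hIndep, hcard⟩ :=
      ih R' ((filter_subset _ _).trans_ssubset (erase_ssubset hvR))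
    have hIR' : ∀ u ∈ I, u ∈ R.erase v ∧ ¬ G.Adj v u := fun u hu => mem_filter.mp (hI hu)
    have hvI : v ∉ I := fun h => by simpa using (hIR' v h).1
    refine ⟨insert v I, insert_subset hvR fun u hu => mem_of_mem_erase (hIR' u hu).1, ?_, ?_⟩
    · rw [coe_insert, isIndepSet_iff, Set.pairwise_insert]
      exact ⟨hIndep, fun u hu _ => ⟨(hIR' u hu).2, fun h => (hIR' u hu).2 h.symm⟩⟩
    · have hsplit : #{u ∈ R.erase v | G.Adj v u} + #R' = #(R.erase v) :=
        card_filter_add_card_filter_not _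
      have hnbr : #{u ∈ R.erase v | G.Adj v u} ≤ #{u ∈ R | G.Adj v u} :=
        card_le_card (filter_subset_filter _ (erase_subset _ _))
      have := card_erase_add_one hvR
      rw [card_insert_of_notMem hvI, add_mul, one_mul]
      omega

end SimpleGraph

theorem card_filter_not_disjoint_le {α κ : Type*} [DecidableEq α] [Fintype κ]
    {A : κ → Finset α} (hA : Pairwise (Disjoint on A)) (N : Finset α) :
    #{j | ¬ Disjoint (A j) N} ≤ #N :=
  calc #{j | ¬ Disjoint (A j) N}
      ≤ #(({j | ¬ Disjoint (A j) N} : Finset κ).biUnion fun j => A j ∩ N) :=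
        card_le_card_biUnion
          (fun _ _ _ _ hjk => (hA hjk).mono inter_subset_left inter_subset_left)
          fun _ hj => not_disjoint_iff_nonempty_inter.mp (mem_filter.mp hj).2
    _ ≤ #N := card_le_card (biUnion_subset.mpr fun _ _ => inter_subset_right)

section DNF

variable {n : ℕ} {κ : Type*} {f : (Fin n → Bool) → Bool}
  {T : κ → Finset (Fin n) × Finset (Fin n)}

theorem termTrue_boolIndicator_iff {t : Finset (Fin n) × Finset (Fin n)} {S : Finset (Fin n)} :
    TermTrue t (boolIndicator S) ↔ t.1 ⊆ S ∧ Disjoint t.2 S := by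
  simp [TermTrue, subset_iff, disjoint_left]

theorem dnf_boolIndicator_eq_true_iff (hf : ∀ x, f x = true ↔ ∃ i, TermTrue (T i) x)
    {S : Finset (Fin n)} :
    f (boolIndicator S) = true ↔ ∃ i, (T i).1 ⊆ S ∧ Disjoint (T i).2 S := by
  simp only [hf, termTrue_boolIndicator_iff]

theorem fst_nonempty_of_dnf (hf : ∀ x, f x = true ↔ ∃ i, TermTrue (T i) x)
    (h0 : f (fun _ => false) = false) (i : κ) : (T i).1.Nonempty := by
  by_contra hi
  have hi0 : TermTrue (T i) (fun _ => false) := by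
    simp_all [TermTrue, not_nonempty_iff_eq_empty]
  simp [(hf _).2 ⟨i, hi0⟩] at h0

theorem dnf_boolIndicator_eq_false (hf : ∀ x, f x = true ↔ ∃ i, TermTrue (T i) x)
    (hblock : Pairwise (Disjoint on fun t => (T t).1)) (hA : ∀ t, (T t).1.Nonempty)
    {K : Finset κ} {S : Finset (Fin n)} (hSK : S ⊆ K.biUnion fun k => (T k).1)
    (hmiss : ∀ k ∈ K, ¬ (T k).1 ⊆ S) : f (boolIndicator S) = false := by
  rw [Bool.eq_false_iff, ne_eq, dnf_boolIndicator_eq_true_iff hf]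
  rintro ⟨t, ht, -⟩
  obtain ⟨v, hv⟩ := hA t
  obtain ⟨k, hk, hvk⟩ := mem_biUnion.mp (hSK (ht hv))
  obtain rfl : k = t := hblock.eq (not_disjoint_iff.mpr ⟨v, hvk, hv⟩)
  exact hmiss k hk ht

theorem dnf_boolIndicator_erase_eq_false (hf : ∀ x, f x = true ↔ ∃ i, TermTrue (T i) x)
    (hblock : Pairwise (Disjoint on fun t => (T t).1)) (hA : ∀ t, (T t).1.Nonempty)
    {i : κ} {u : Fin n} (hu : u ∈ (T i).1) : f (boolIndicator ((T i).1.erase u)) = false :=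
  dnf_boolIndicator_eq_false hf hblock hA (K := {i}) (by simpa using erase_subset u _)
    fun k hk h => notMem_erase u _ (h (mem_singleton.mp hk ▸ hu))

/-- The term witnessing `f (A_i ∪ {v}) = true` is not `i`, as `v ∈ N_i`; so its positive set
avoids `A_i` and lies in `{v}`. -/
theorem dnf_boolIndicator_insert_of_subset (hf : ∀ x, f x = true ↔ ∃ i, TermTrue (T i) x)
    (hblock : Pairwise (Disjoint on fun t => (T t).1)) {i : κ} {v : Fin n} (hv : v ∈ (T i).2)
    (h : f (boolIndicator (insert v (T i).1)) = true) {S : Finset (Fin n)} (hS : S ⊆ (T i).1) :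
    f (boolIndicator (insert v S)) = true := by
  rw [dnf_boolIndicator_eq_true_iff hf] at h ⊢
  obtain ⟨t, htA, htN⟩ := h
  have hti : t ≠ i := by
    rintro rfl
    exact disjoint_left.mp htN hv (mem_insert_self v _)
  refine ⟨t, fun u hu => ?_, htN.mono_right (insert_subset_insert v hS)⟩
  rcases mem_insert.mp (htA hu) with rfl | huA
  · exact mem_insert_self _ _
  · exact absurd huA (disjoint_left.mp (hblock hti) hu)

theorem card_fst_add_card_filter_eq_false_le_sens
    (hf : ∀ x, f x = true ↔ ∃ i, TermTrue (T i) x)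
    (hblock : Pairwise (Disjoint on fun t => (T t).1)) (hA : ∀ t, (T t).1.Nonempty) {i : κ}
    (hterm : Disjoint (T i).1 (T i).2) :
    #(T i).1 + #{v ∈ (T i).2 | f (boolIndicator (insert v (T i).1)) = false} ≤ sens f := by
  have hfi : f (boolIndicator (T i).1) = true :=
    (dnf_boolIndicator_eq_true_iff hf).2 ⟨i, subset_rfl, hterm.symm⟩
  rw [← card_union_of_disjoint (hterm.mono_right (filter_subset _ _))]
  refine card_le_sens (x := boolIndicator (T i).1) fun v hv => ?_
  rw [hfi]
  rcases mem_union.mp hv with hvA | hvN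
  · rw [bflip_boolIndicator_of_mem hvA, dnf_boolIndicator_erase_eq_false hf hblock hA hvA]
    simp
  · obtain ⟨hvN, hvf⟩ := mem_filter.mp hvN
    rw [bflip_boolIndicator_of_notMem (disjoint_right.mp hterm hvN), hvf]
    simp

theorem card_filter_eq_true_le_sens (hf : ∀ x, f x = true ↔ ∃ i, TermTrue (T i) x)
    (hblock : Pairwise (Disjoint on fun t => (T t).1)) (hA : ∀ t, (T t).1.Nonempty) {i : κ}
    (hterm : Disjoint (T i).1 (T i).2) :
    #{v ∈ (T i).2 | f (boolIndicator (insert v (T i).1)) = true} ≤ sens f := by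
  obtain ⟨u, hu⟩ := hA i
  have hf0 := dnf_boolIndicator_erase_eq_false hf hblock hA hu
  refine card_le_sens (x := boolIndicator ((T i).1.erase u)) fun v hv => ?_
  obtain ⟨hvN, hvf⟩ := mem_filter.mp hv
  have hvA : v ∉ (T i).1.erase u := fun h => disjoint_right.mp hterm hvN (mem_of_mem_erase h)
  rw [bflip_boolIndicator_of_notMem hvA, hf0,
    dnf_boolIndicator_insert_of_subset hf hblock hvN hvf (erase_subset u _)]
  simp

theorem card_fst_add_card_snd_le_two_mul_sens (hf : ∀ x, f x = true ↔ ∃ i, TermTrue (T i) x)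
    (hblock : Pairwise (Disjoint on fun t => (T t).1)) (hA : ∀ t, (T t).1.Nonempty) {i : κ}
    (hterm : Disjoint (T i).1 (T i).2) :
    #(T i).1 + #(T i).2 ≤ 2 * sens f := by
  have hsplit := card_filter_add_card_filter_not (s := (T i).2)
    fun v => f (boolIndicator (insert v (T i).1)) = true
  simp only [Bool.not_eq_true] at hsplit
  have := card_fst_add_card_filter_eq_false_le_sens hf hblock hA hterm
  have := card_filter_eq_true_le_sens hf hblock hA hterm
  omega

def conflictGraph (T : κ → Finset (Fin n) × Finset (Fin n)) : SimpleGraph κ :=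
  SimpleGraph.fromRel fun i j => ¬ Disjoint (T j).1 (T i).2

theorem card_filter_not_disjoint_snd_le [Fintype κ]
    (hf : ∀ x, f x = true ↔ ∃ i, TermTrue (T i) x)
    (hblock : Pairwise (Disjoint on fun t => (T t).1)) (hA : ∀ t, (T t).1.Nonempty) {i : κ}
    (hterm : Disjoint (T i).1 (T i).2) :
    #{j | ¬ Disjoint (T j).1 (T i).2} ≤ 2 * sens f - 1 := by
  have := card_filter_not_disjoint_le hblock (T i).2
  have := card_fst_add_card_snd_le_two_mul_sens hf hblock hA hterm
  have := (hA i).card_pos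
  omega

/-- Set the positive variables of the terms in `I` except one variable `a k` of each: this is a
zero of `f`, and flipping any `a j` satisfies term `j`, whose negative set avoids every variable
set, by independence. -/
theorem card_le_sens_of_isIndepSet (hf : ∀ x, f x = true ↔ ∃ i, TermTrue (T i) x)
    (hblock : Pairwise (Disjoint on fun t => (T t).1)) (hterm : ∀ i, Disjoint (T i).1 (T i).2)
    {a : κ → Fin n} (ha : ∀ t, a t ∈ (T t).1) {I : Finset κ}
    (hI : (conflictGraph T).IsIndepSet (I : Set κ)) : #I ≤ sens f := by
  set S := I.biUnion fun k => (T k).1.erase (a k)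
  have haS : ∀ t, a t ∉ S := by
    intro t h
    obtain ⟨k, -, hk⟩ := mem_biUnion.mp h
    obtain ⟨hne, hkA⟩ := mem_erase.mp hk
    obtain rfl : t = k := hblock.eq (not_disjoint_iff.mpr ⟨a t, ha t, hkA⟩)
    exact hne rfl
  have hfS : f (boolIndicator S) = false :=
    dnf_boolIndicator_eq_false hf hblock (fun t => ⟨a t, ha t⟩)
      (biUnion_mono fun k _ => erase_subset _ _) fun k _ h => haS k (h (ha k))
  have ha_inj : Injective a := fun t₁ t₂ h =>
    hblock.eq (not_disjoint_iff.mpr ⟨a t₁, ha t₁, h ▸ ha t₂⟩)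
  rw [← card_image_of_injective I ha_inj]
  refine card_le_sens (x := boolIndicator S) fun v hv => ?_
  obtain ⟨j, hj, rfl⟩ := mem_image.mp hv
  rw [bflip_boolIndicator_of_notMem (haS j), hfS, ne_eq, Bool.not_eq_false,
    dnf_boolIndicator_eq_true_iff hf]
  refine ⟨j, fun u hu => ?_,
    disjoint_insert_right.mpr ⟨disjoint_left.mp (hterm j) (ha j), ?_⟩⟩
  · by_cases huj : u = a j
    · exact huj ▸ mem_insert_self _ _
    · exact mem_insert_of_mem (mem_biUnion.mpr ⟨j, hj, mem_erase.mpr ⟨huj, hu⟩⟩)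
  · refine (disjoint_biUnion_right _ _ _).mpr fun k hk => .mono_right (erase_subset _ _) ?_
    by_cases hjk : j = k
    · exact hjk ▸ (hterm j).symm
    · have hadj := hI (mem_coe.mpr hj) (mem_coe.mpr hk) hjk
      simp only [conflictGraph, SimpleGraph.fromRel_adj, not_and, not_or, not_not] at hadj
      exact (hadj hjk).1.symm

end DNF

theorem bs_le_four_sens_sq_general {n w : ℕ} (f : (Fin n → Bool) → Bool)
    (T : Fin w → Finset (Fin n) × Finset (Fin n))
    (hterm : ∀ i, Disjoint (T i).1 (T i).2)
    (hf : ∀ x, f x = true ↔ ∃ i, TermTrue (T i) x)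
    (h0 : f (fun _ => false) = false)
    (hblock : ∀ i j, i ≠ j → Disjoint (T i).1 (T j).1)
    (hnorm : bs f = bsAt f (fun _ => false)) :
    bs f ≤ 4 * sens f ^ 2 := by
  classical
  have hblock' : Pairwise (Disjoint on fun t => (T t).1) := fun i j => hblock i j
  choose a ha using fst_nonempty_of_dnf hf h0
  have hA : ∀ t, (T t).1.Nonempty := fun t => ⟨a t, ha t⟩
  have hbs : bsAt f (fun _ => false) ≤ w := by
    simpa using bsAt_le_card_of_forall_exists_subset (f := f) hA fun B hB => by
      rw [bflipS_false, h0, ne_eq, Bool.not_eq_false, dnf_boolIndicator_eq_true_iff hf] at hB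
      obtain ⟨t, ht, -⟩ := hB
      exact ⟨t, ht⟩
  obtain ⟨I, -, hI, hwI⟩ := (conflictGraph T).exists_isIndepSet_card_le_mul _
    (fun R hR => (conflictGraph T).exists_mem_card_filter_adj_le _
      (fun i => card_filter_not_disjoint_snd_le hf hblock' hA (hterm i))
      (fun i j h => ((SimpleGraph.fromRel_adj _ i j).mp h).2) hR) univ
  have hIs := card_le_sens_of_isIndepSet hf hblock' hterm ha hI
  calc bs f ≤ w := hnorm ▸ hbs
    _ ≤ #I * (2 * (2 * sens f - 1) + 1) := by simpa using hwI
    _ ≤ sens f * (2 * (2 * sens f - 1) + 1) := Nat.mul_le_mul_right _ hIs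
    _ ≤ 4 * sens f ^ 2 := by
      rcases Nat.eq_zero_or_pos (sens f) with h | h
      · simp [h]
      · rw [sq, mul_comm 4, mul_assoc]
        exact Nat.mul_le_mul_left _ (by omega)

theorem bs_le_four_sens_sq {n w : ℕ} (f : (Fin n → Bool) → Bool)
    (T : Fin w → Finset (Fin n) × Finset (Fin n))
    (hterm : ∀ i, Disjoint (T i).1 (T i).2)
    (hf : ∀ x, f x = true ↔ ∃ i, TermTrue (T i) x)
    (h0 : f (fun _ => false) = false)
    (hnr : ∀ i, ∃ x, TermTrue (T i) x ∧ ∀ j, j ≠ i → ¬ TermTrue (T j) x)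
    (hblock : ∀ i j, i ≠ j → Disjoint (T i).1 (T j).1)
    (hnorm : bs f = bsAt f (fun _ => false)) :
    bs f ≤ 4 * sens f ^ 2 :=
  bs_le_four_sens_sq_general f T hterm hf h0 hblock hnorm
end

section
/- Let f be a Boolean function given by a DNF with terms ∧_1,...,∧_w (positive sets A_i, negative sets Ā_i), f(0^n) = 0, and each term non-redundant. Define Γ_i = {j : |A_i ∩ Ā_j| + |A_j ∩ Ā_i| = 1} and Γ = max_i |Γ_i|, and let d be the width of the DNF. Then d − Γ ≤ s_1(f) ≤ d. -/
open Finset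

variable {ι : Type*} [Fintype ι] [DecidableEq ι]

theorem sens1_bounds_via_gamma {n w d Γ : ℕ} (f : (Fin n → Bool) → Bool)
    (T : Fin w → Finset (Fin n) × Finset (Fin n))
    (hterm : ∀ i, Disjoint (T i).1 (T i).2)
    (hf : ∀ x, f x = true ↔ ∃ i, TermTrue (T i) x)
    (h0 : f (fun _ => false) = false)
    (hnr : ∀ i, ∃ x, TermTrue (T i) x ∧ ∀ j, j ≠ i → ¬ TermTrue (T j) x)
    (hd : d = univ.sup fun i => (T i).1.card + (T i).2.card)
    (hΓ : Γ = univ.sup fun i =>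
      (univ.filter fun j =>
        ((T i).1 ∩ (T j).2).card + ((T j).1 ∩ (T i).2).card = 1).card) :
    d - Γ ≤ sens1 f ∧ sens1 f ≤ d := by
  classical
  constructor
  · -- lower bound
    rcases Nat.eq_zero_or_pos w with hw | hw
    · subst hw
      have : d = 0 := by simp [hd]
      simp [this]
    have : Nonempty (Fin w) := ⟨⟨0, hw⟩⟩
    obtain ⟨i, -, hieq⟩ := Finset.exists_mem_eq_sup (univ : Finset (Fin w)) univ_nonempty
      (fun i => (T i).1.card + (T i).2.card)
    obtain ⟨x, hxi, hxo⟩ := hnr i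
    have hfx : f x = true := (hf x).2 ⟨i, hxi⟩
    set S := (T i).1 ∪ (T i).2 with hS
    have hScard : S.card = d := by
      rw [hS, card_union_of_disjoint (hterm i), hd, hieq]
    have hupd : ∀ (j m : Fin n), m ≠ j → bflip x j m = x m := by
      intro j m hm
      simp [bflip, Function.update_of_ne hm]
    have hupdj : ∀ j : Fin n, bflip x j j = !x j := by
      intro j; simp [bflip]
    -- key lemma
    have key : ∀ j ∈ S, ∀ k, TermTrue (T k) (bflip x j) →
        ((T i).1 ∩ (T k).2) ∪ ((T k).1 ∩ (T i).2) = {j} := by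
      intro j hj k hk
      have hki : k ≠ i := by
        rintro rfl
        rcases mem_union.mp hj with h1 | h2
        · have := hk.1 j h1
          rw [hupdj, hxi.1 j h1] at this
          simp at this
        · have := hk.2 j h2
          rw [hupdj, hxi.2 j h2] at this
          simp at this
      have hkx : ¬ TermTrue (T k) x := hxo k hki
      have hjC : j ∈ (T i).1 ∩ (T k).2 ∨ j ∈ (T k).1 ∩ (T i).2 := by
        rcases mem_union.mp hj with h1 | h2
        · left
          refine mem_inter.mpr ⟨h1, ?_⟩
          by_contra h2
          apply hkx
          constructor
          · intro m hm
            by_cases hmj : m = j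
            · subst hmj; exact hxi.1 m h1
            · rw [← hupd j m hmj]; exact hk.1 m hm
          · intro m hm
            have hmj : m ≠ j := fun h => h2 (h ▸ hm)
            rw [← hupd j m hmj]; exact hk.2 m hm
        · right
          refine mem_inter.mpr ⟨?_, h2⟩
          by_contra h1
          apply hkx
          constructor
          · intro m hm
            have hmj : m ≠ j := fun h => h1 (h ▸ hm)
            rw [← hupd j m hmj]; exact hk.1 m hm
          · intro m hm
            by_cases hmj : m = j
            · subst hmj; exact hxi.2 m h2
            · rw [← hupd j m hmj]; exact hk.2 m hm
      ext m
      simp only [mem_union, mem_inter, mem_singleton]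
      constructor
      · rintro (⟨m1, m2⟩ | ⟨m1, m2⟩)
        · by_contra hmj
          have h1 := hk.2 m m2
          rw [hupd j m hmj, hxi.1 m m1] at h1
          simp at h1
        · by_contra hmj
          have h1 := hk.1 m m1
          rw [hupd j m hmj, hxi.2 m m2] at h1
          simp at h1
      · rintro rfl
        rcases hjC with h | h
        · exact Or.inl (mem_inter.mp h)
        · exact Or.inr (mem_inter.mp h)
    set Γi := (univ.filter fun k =>
      ((T i).1 ∩ (T k).2).card + ((T k).1 ∩ (T i).2).card = 1) with hΓiS
    have hΓi : Γi.card ≤ Γ := by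
      rw [hΓ, hΓiS]
      exact Finset.le_sup (f := fun i => (univ.filter fun j =>
        ((T i).1 ∩ (T j).2).card + ((T j).1 ∩ (T i).2).card = 1).card) (mem_univ i)
    set insens := S.filter (fun j => f (bflip x j) = f x) with hIns
    -- choose a witness term for each insensitive coordinate
    have hwit : ∀ j ∈ insens, ∃ k, TermTrue (T k) (bflip x j) := by
      intro j hj
      have := (mem_filter.mp hj).2
      rw [hfx] at this
      exact (hf _).1 this
    choose! g hg using hwit
    have hmaps : ∀ j ∈ insens, g j ∈ Γi := by
      intro j hj
      have hkey := key j (mem_filter.mp hj).1 (g j) (hg j hj)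
      have hdisj : Disjoint ((T i).1 ∩ (T (g j)).2) ((T (g j)).1 ∩ (T i).2) := by
        refine Finset.disjoint_left.mpr ?_
        intro a ha hb
        exact (Finset.disjoint_left.mp (hterm i)) (mem_inter.mp ha).1 (mem_inter.mp hb).2
      rw [hΓiS, mem_filter]
      refine ⟨mem_univ _, ?_⟩
      rw [← card_union_of_disjoint hdisj, hkey, card_singleton]
    have hinj : Set.InjOn g insens := by
      intro j hj j' hj' hgg
      have h1 := key j (mem_filter.mp hj).1 (g j) (hg j hj)
      have h2 := key j' (mem_filter.mp hj').1 (g j') (hg j' hj')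
      rw [hgg] at h1
      rw [h1] at h2
      exact Finset.singleton_inj.mp h2
    have hcardins : insens.card ≤ Γ :=
      le_trans (Finset.card_le_card_of_injOn g hmaps hinj) hΓi
    have hsplit : insens.card + (S.filter (fun j => ¬ (f (bflip x j) = f x))).card = S.card := by
      rw [hIns]
      exact Finset.card_filter_add_card_filter_not _
    have hsub : (S.filter (fun j => ¬ (f (bflip x j) = f x))).card ≤ sensAt f x := by
      apply Finset.card_le_card
      intro j hj
      simp only [mem_filter] at hj ⊢
      exact ⟨mem_univ _, hj.2⟩
    have hx1 : x ∈ univ.filter (fun y => f y = true) := mem_filter.mpr ⟨mem_univ _, hfx⟩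
    have hle : sensAt f x ≤ sens1 f := Finset.le_sup hx1
    omega
  · -- upper bound
    rw [sens1]
    apply Finset.sup_le
    intro x hx
    have hfx : f x = true := (mem_filter.mp hx).2
    obtain ⟨i, hi⟩ := (hf x).1 hfx
    have hsub : (univ.filter fun j => f (bflip x j) ≠ f x) ⊆ (T i).1 ∪ (T i).2 := by
      intro j hj
      simp only [mem_filter, mem_univ, true_and] at hj
      by_contra hjn
      simp only [mem_union, not_or] at hjn
      apply hj
      rw [hfx]
      refine (hf _).2 ⟨i, ?_, ?_⟩
      · intro m hm
        have hmj : m ≠ j := fun h => hjn.1 (h ▸ hm)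
        rw [bflip, Function.update_of_ne hmj]
        exact hi.1 m hm
      · intro m hm
        have hmj : m ≠ j := fun h => hjn.2 (h ▸ hm)
        rw [bflip, Function.update_of_ne hmj]
        exact hi.2 m hm
    calc sensAt f x ≤ ((T i).1 ∪ (T i).2).card := Finset.card_le_card hsub
      _ ≤ (T i).1.card + (T i).2.card := Finset.card_union_le _ _
      _ ≤ d := by rw [hd]; exact Finset.le_sup (f := fun i => (T i).1.card + (T i).2.card) (mem_univ i)
end
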